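/- Let V₁ and V₂ be commuting isometries on a complex Hilbert space H, V := V₁V₂, and C := I − V₁V₁* − V₂V₂* + VV*. Then the eigenspace of C at eigenvalue 1 is {h ∈ H : Ch = h} = ker V₁* ∩ ker V₂*, and the eigenspace of C at eigenvalue −1 is {h ∈ H : Ch = −h} = ran V₁ ∩ ran V₂ ∩ (ran V)ᗮ. -/

import Mathlib

open ContinuousLinearMap
open scoped InnerProductSpace

/-!
For `h ∈ H` the quadratic form of `C` is
`re ⟪h, C h⟫ = ‖h‖² - ‖V₁* h‖² - ‖V₂* h‖² + ‖V* h‖²`, and since `V* = V₂* V₁* = V₁* V₂*` with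
contractions `V₁*`, `V₂*`, the last term is dominated by each of the two middle ones. Hence
`C h = h` forces `V₁* h = V₂* h = 0`, while `C h = -h` forces `‖V₁* h‖ = ‖V₂* h‖ = ‖h‖` and
`V* h = 0`. For an isometry `W`, `‖h - W W* h‖² = ‖h‖² - ‖W* h‖²`, so `‖W* h‖ = ‖h‖` says exactly
that `h ∈ ran W`; and `ker V* = (ran V)ᗮ`.
-/
namespace ContinuousLinearMap

variable {𝕜 H K : Type*} [RCLike 𝕜] [NormedAddCommGroup H] [InnerProductSpace 𝕜 H]
  [CompleteSpace H] [NormedAddCommGroup K] [InnerProductSpace 𝕜 K] [CompleteSpace K]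

theorem re_inner_comp_adjoint_apply (A : K →L[𝕜] H) (h : H) :
    RCLike.re ⟪h, (A ∘L adjoint A) h⟫_𝕜 = ‖adjoint A h‖ ^ 2 := by
  simpa using (apply_norm_sq_eq_inner_adjoint_right (adjoint A) h).symm

section Isometry

variable {V : K →L[𝕜] H} (hV : adjoint V ∘L V = 1)
include hV

theorem adjoint_apply_apply_of_adjoint_comp_self (x : K) : adjoint V (V x) = x :=
  congr($hV x)

theorem norm_sub_apply_adjoint_apply_sq_of_adjoint_comp_self (h : H) :
    ‖h - V (adjoint V h)‖ ^ 2 = ‖h‖ ^ 2 - ‖adjoint V h‖ ^ 2 := by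
  rw [@norm_sub_sq 𝕜, ← comp_apply, re_inner_comp_adjoint_apply, comp_apply,
    (norm_map_iff_adjoint_comp_self V).2 hV]
  ring

theorem norm_adjoint_apply_le_of_adjoint_comp_self (h : H) : ‖adjoint V h‖ ≤ ‖h‖ := by
  have := norm_sub_apply_adjoint_apply_sq_of_adjoint_comp_self hV h
  nlinarith [norm_nonneg (adjoint V h), norm_nonneg h, sq_nonneg ‖h - V (adjoint V h)‖]

theorem mem_range_iff_apply_adjoint_apply_eq (h : H) :
    h ∈ LinearMap.range (V : K →ₗ[𝕜] H) ↔ V (adjoint V h) = h := by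
  refine ⟨?_, fun hh ↦ ⟨adjoint V h, hh⟩⟩
  rintro ⟨x, rfl⟩
  rw [coe_coe, adjoint_apply_apply_of_adjoint_comp_self hV]

theorem mem_range_iff_norm_adjoint_apply_eq (h : H) :
    h ∈ LinearMap.range (V : K →ₗ[𝕜] H) ↔ ‖adjoint V h‖ = ‖h‖ := by
  rw [mem_range_iff_apply_adjoint_apply_eq hV, eq_comm, ← sub_eq_zero, ← norm_eq_zero,
    ← sq_eq_zero_iff, norm_sub_apply_adjoint_apply_sq_of_adjoint_comp_self hV, sub_eq_zero,
    sq_eq_sq₀ (norm_nonneg _) (norm_nonneg _), eq_comm]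

end Isometry

end ContinuousLinearMap

section JointDefect

variable {𝕜 H : Type*} [RCLike 𝕜] [NormedAddCommGroup H] [InnerProductSpace 𝕜 H]
  [CompleteSpace H]

noncomputable def jointDefect (V₁ V₂ : H →L[𝕜] H) : H →L[𝕜] H :=
  1 - V₁ ∘L adjoint V₁ - V₂ ∘L adjoint V₂ + (V₁ ∘L V₂) ∘L adjoint (V₁ ∘L V₂)

theorem re_inner_jointDefect_apply (V₁ V₂ : H →L[𝕜] H) (h : H) :
    RCLike.re ⟪h, jointDefect V₁ V₂ h⟫_𝕜 =
      ‖h‖ ^ 2 - ‖adjoint V₁ h‖ ^ 2 - ‖adjoint V₂ h‖ ^ 2 + ‖adjoint (V₁ ∘L V₂) h‖ ^ 2 := by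
  simp only [jointDefect, add_apply, sub_apply, one_apply_eq_self, inner_add_right,
    inner_sub_right, map_add, map_sub, re_inner_comp_adjoint_apply, inner_self_eq_norm_sq]

variable {V₁ V₂ : H →L[𝕜] H}

theorem jointDefect_apply_eq_self_iff (hV₁ : adjoint V₁ ∘L V₁ = 1)
    (hV₂ : adjoint V₂ ∘L V₂ = 1) (hcomm : V₁ ∘L V₂ = V₂ ∘L V₁) (h : H) :
    jointDefect V₁ V₂ h = h ↔ adjoint V₁ h = 0 ∧ adjoint V₂ h = 0 := by
  refine ⟨fun hC ↦ ?_, fun ⟨h₁, h₂⟩ ↦ by simp [jointDefect, h₁, h₂]⟩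
  have key := re_inner_jointDefect_apply V₁ V₂ h
  rw [hC, inner_self_eq_norm_sq] at key
  have le₁ : ‖adjoint (V₁ ∘L V₂) h‖ ≤ ‖adjoint V₁ h‖ := by
    rw [adjoint_comp]; exact norm_adjoint_apply_le_of_adjoint_comp_self hV₂ _
  have le₂ : ‖adjoint (V₁ ∘L V₂) h‖ ≤ ‖adjoint V₂ h‖ := by
    rw [hcomm, adjoint_comp]; exact norm_adjoint_apply_le_of_adjoint_comp_self hV₁ _
  constructor <;> rw [← norm_eq_zero] <;>
    nlinarith [norm_nonneg (adjoint V₁ h), norm_nonneg (adjoint V₂ h),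
      norm_nonneg (adjoint (V₁ ∘L V₂) h)]

theorem jointDefect_apply_eq_neg_iff (hV₁ : adjoint V₁ ∘L V₁ = 1)
    (hV₂ : adjoint V₂ ∘L V₂ = 1) (h : H) :
    jointDefect V₁ V₂ h = -h ↔ h ∈ LinearMap.range (V₁ : H →ₗ[𝕜] H) ∧
      h ∈ LinearMap.range (V₂ : H →ₗ[𝕜] H) ∧ adjoint (V₁ ∘L V₂) h = 0 := by
  refine ⟨fun hC ↦ ?_, fun ⟨h₁, h₂, h₀⟩ ↦ ?_⟩
  · have key := re_inner_jointDefect_apply V₁ V₂ h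
    rw [hC, inner_neg_right, map_neg, inner_self_eq_norm_sq] at key
    have le₁ := norm_adjoint_apply_le_of_adjoint_comp_self hV₁ h
    have le₂ := norm_adjoint_apply_le_of_adjoint_comp_self hV₂ h
    have nonneg₁ := norm_nonneg (adjoint V₁ h)
    have nonneg₂ := norm_nonneg (adjoint V₂ h)
    rw [mem_range_iff_norm_adjoint_apply_eq hV₁, mem_range_iff_norm_adjoint_apply_eq hV₂,
      ← norm_eq_zero]
    exact ⟨by nlinarith, by nlinarith, by nlinarith [norm_nonneg (adjoint (V₁ ∘L V₂) h)]⟩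
  · rw [mem_range_iff_apply_adjoint_apply_eq hV₁] at h₁
    rw [mem_range_iff_apply_adjoint_apply_eq hV₂] at h₂
    simp only [jointDefect, add_apply, sub_apply, one_apply_eq_self, comp_apply, h₁, h₂, h₀,
      map_zero]
    abel

end JointDefect

/-- Let `V₁, V₂` be commuting isometries on a complex Hilbert space,
`V := V₁V₂`, and `C := I − V₁V₁* − V₂V₂* + VV*`. Then the eigenspace of `C` at `1` is
`ker V₁* ∩ ker V₂*`, and the eigenspace of `C` at `−1` is `ran V₁ ∩ ran V₂ ∩ (ran V)ᗮ`. -/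
theorem stmt12 {H : Type*} [NormedAddCommGroup H] [InnerProductSpace ℂ H] [CompleteSpace H]
    (V₁ V₂ : H →L[ℂ] H)
    (hV₁ : adjoint V₁ ∘L V₁ = 1) (hV₂ : adjoint V₂ ∘L V₂ = 1)
    (hcomm : V₁ ∘L V₂ = V₂ ∘L V₁)
    (C : H →L[ℂ] H)
    (hC : C = 1 - V₁ ∘L adjoint V₁ - V₂ ∘L adjoint V₂
        + (V₁ ∘L V₂) ∘L adjoint (V₁ ∘L V₂)) :
    ({h : H | C h = h} =
        ↑(LinearMap.ker (adjoint V₁ : H →ₗ[ℂ] H) ⊓ LinearMap.ker (adjoint V₂ : H →ₗ[ℂ] H))) ∧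
    ({h : H | C h = -h} =
        ↑(LinearMap.range (V₁ : H →ₗ[ℂ] H) ⊓ LinearMap.range (V₂ : H →ₗ[ℂ] H) ⊓
          (LinearMap.range ((V₁ ∘L V₂ : H →L[ℂ] H) : H →ₗ[ℂ] H))ᗮ : Submodule ℂ H)) := by
  obtain rfl : C = jointDefect V₁ V₂ := hC
  constructor
  · ext h
    exact jointDefect_apply_eq_self_iff hV₁ hV₂ hcomm h
  · ext h
    rw [Set.mem_ofPred_eq, jointDefect_apply_eq_neg_iff hV₁ hV₂, orthogonal_range]
    simp only [SetLike.mem_coe, Submodule.mem_inf, LinearMap.mem_ker, coe_coe, and_assoc]
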